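/- Fixing a positive definite Σ₁ and mean μ₁, the map (μ₀, L₀) ↦ KL(N(μ₀, L₀L₀ᵀ) ‖ N(μ₁, Σ₁)) is convex in (μ₀, L₀) when restricted to L₀ lower-triangular with positive diagonal entries. -/

import Mathlib

/-!
On lower triangular matrices with positive diagonal, `log det (L Lᵀ) = 2 ∑ᵢ log Lᵢᵢ` is a sum
of concave functions of single entries. The trace term and the Mahalanobis term are `x ↦ B x x`
for symmetric positive semidefinite bilinear forms `B`, composed with affine maps, and these are
convex since `a B x x + b B y y - B (a x + b y) (a x + b y) = a b B (x - y) (x - y)` when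
`a + b = 1`.
-/

open Matrix Set

theorem concaveOn_finset_sum {𝕜 E β α : Type*} [Semiring 𝕜] [PartialOrder 𝕜]
    [AddCommMonoid E] [SMul 𝕜 E] [AddCommMonoid β] [PartialOrder β] [IsOrderedAddMonoid β]
    [Module 𝕜 β] {s : Set E} (hs : Convex 𝕜 s) {t : Finset α} {f : α → E → β}
    (hf : ∀ i ∈ t, ConcaveOn 𝕜 s (f i)) :
    ConcaveOn 𝕜 s fun x => ∑ i ∈ t, f i x := by
  classical
  induction t using Finset.induction_on with
  | empty => simpa only [Finset.sum_empty] using concaveOn_const (0 : β) hs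
  | insert a t ha ih =>
    simp only [Finset.sum_insert ha]
    exact (hf a (t.mem_insert_self a)).add (ih fun i hi => hf i (Finset.mem_insert_of_mem hi))

theorem LinearMap.BilinForm.convexOn_univ_apply_self {E : Type*} [AddCommGroup E] [Module ℝ E]
    {B : LinearMap.BilinForm ℝ E} (hB : B.IsSymm) (hB₀ : ∀ x, 0 ≤ B x x) :
    ConvexOn ℝ univ fun x => B x x := by
  refine ⟨convex_univ, fun x _ y _ a b ha hb hab => ?_⟩
  have hxy := hB.eq y x
  have hgap : a * B x x + b * B y y - B (a • x + b • y) (a • x + b • y)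
      = a * b * B (x - y) (x - y) := by
    obtain rfl : b = 1 - a := by linarith
    simp only [map_add, map_sub, map_smul, LinearMap.add_apply, LinearMap.sub_apply,
      LinearMap.smul_apply, smul_eq_mul, hxy]
    ring
  have := mul_nonneg (mul_nonneg ha hb) (hB₀ (x - y))
  simp only [smul_eq_mul]
  linarith

variable {ι κ : Type*} [Fintype ι] [Fintype κ]

theorem Matrix.PosSemidef.convexOn_dotProduct_mulVec [DecidableEq ι] {A : Matrix ι ι ℝ}
    (hA : A.PosSemidef) : ConvexOn ℝ univ fun x => x ⬝ᵥ A *ᵥ x := by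
  have hsymm : A.toBilin'.IsSymm :=
    isSymm_toBilin'_iff_isSymm.mpr (isHermitian_iff_isSymm.mp hA.isHermitian)
  simpa only [toBilin'_apply'] using
    LinearMap.BilinForm.convexOn_univ_apply_self hsymm fun x => by
      simpa only [toBilin'_apply', star_trivial] using hA.dotProduct_mulVec_nonneg x

def Matrix.traceBilin (A : Matrix ι ι ℝ) : LinearMap.BilinForm ℝ (Matrix ι κ ℝ) :=
  LinearMap.mk₂ ℝ (fun L M => (A * (L * Mᵀ)).trace)
    (fun L₁ L₂ M => by simp only [Matrix.add_mul, Matrix.mul_add, trace_add])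
    (fun c L M => by simp only [Matrix.smul_mul, Matrix.mul_smul, trace_smul])
    (fun L M₁ M₂ => by simp only [transpose_add, Matrix.mul_add, trace_add])
    (fun c L M => by simp only [transpose_smul, Matrix.mul_smul, trace_smul])

theorem Matrix.PosSemidef.convexOn_trace_mul_mul_transpose {A : Matrix ι ι ℝ}
    (hA : A.PosSemidef) : ConvexOn ℝ univ fun L : Matrix ι κ ℝ => (A * (L * Lᵀ)).trace := by
  have hsymm : (traceBilin (κ := κ) A).IsSymm := ⟨fun L M => by
    simp only [traceBilin, LinearMap.mk₂_apply]
    rw [← trace_transpose, transpose_mul, transpose_mul, transpose_transpose,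
      (isHermitian_iff_isSymm.mp hA.isHermitian).eq, ← Matrix.mul_assoc, trace_mul_comm,
      Matrix.mul_assoc]⟩
  refine LinearMap.BilinForm.convexOn_univ_apply_self hsymm fun L => ?_
  simp only [traceBilin, LinearMap.mk₂_apply]
  rw [← Matrix.mul_assoc, trace_mul_comm, ← Matrix.mul_assoc]
  simpa only [conjTranspose_eq_transpose_of_trivial] using
    (hA.conjTranspose_mul_mul_same L).trace_nonneg

def Matrix.choleskyFactors (ι : Type*) [LinearOrder ι] : Set (Matrix ι ι ℝ) :=
  {L | (∀ i j, i < j → L i j = 0) ∧ ∀ i, 0 < L i i}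

section CholeskyFactors

variable [LinearOrder ι]

omit [Fintype ι] in
theorem Matrix.convex_choleskyFactors : Convex ℝ (choleskyFactors ι) := by
  rintro L ⟨hL, hL₀⟩ M ⟨hM, hM₀⟩ a b ha hb hab
  refine ⟨fun i j hij => ?_, fun i => ?_⟩
  · simp [hL i j hij, hM i j hij]
  · simpa using convex_Ioi (0 : ℝ) (hL₀ i) (hM₀ i) ha hb hab

theorem Matrix.log_det_mul_transpose_of_mem_choleskyFactors {L : Matrix ι ι ℝ}
    (hL : L ∈ choleskyFactors ι) : Real.log (L * Lᵀ).det = 2 * ∑ i, Real.log (L i i) := by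
  have hdiag : ∀ i ∈ Finset.univ, L i i ≠ 0 := fun i _ => (hL.2 i).ne'
  have hdet : L.det = ∏ i, L i i :=
    det_of_isLowerTriangular L fun i j hij => hL.1 i j hij
  have hdet₀ : L.det ≠ 0 := hdet ▸ Finset.prod_ne_zero_iff.mpr hdiag
  rw [det_mul, det_transpose, Real.log_mul hdet₀ hdet₀, hdet, Real.log_prod hdiag]
  ring

theorem Matrix.concaveOn_log_det_mul_transpose :
    ConcaveOn ℝ (choleskyFactors ι) fun L => Real.log (L * Lᵀ).det := by
  have hdiag : ∀ i, ConcaveOn ℝ (choleskyFactors ι) fun L => Real.log (L i i) := fun i =>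
    (strictConcaveOn_log_Ioi.concaveOn.comp_linearMap (entryLinearMap ℝ ℝ i i)).subset
      (fun L hL => hL.2 i) convex_choleskyFactors
  have hsum := concaveOn_finset_sum convex_choleskyFactors fun i (_ : i ∈ Finset.univ) => hdiag i
  exact (hsum.smul zero_le_two).congr fun L hL =>
    (log_det_mul_transpose_of_mem_choleskyFactors hL).symm

end CholeskyFactors

/-- Fixing a positive definite `Σ₁` and mean `μ₁`, the map
`(μ₀, L₀) ↦ KL(N(μ₀, L₀L₀ᵀ) ‖ N(μ₁, Σ₁))`, given in closed form by
`½[log det Σ₁ − log det(L₀L₀ᵀ) − n + Tr(Σ₁⁻¹L₀L₀ᵀ) + (μ₁−μ₀)ᵀΣ₁⁻¹(μ₁−μ₀)]`,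
is convex on the set of pairs with `L₀` lower triangular with positive diagonal. -/
theorem kl_gaussian_convex_in_first {n : ℕ} (μ₁ : Fin n → ℝ)
    (S₁ : Matrix (Fin n) (Fin n) ℝ) (hS₁ : S₁.PosDef) :
    ConvexOn ℝ
      {p : (Fin n → ℝ) × Matrix (Fin n) (Fin n) ℝ |
        (∀ i j : Fin n, i < j → p.2 i j = 0) ∧ ∀ i : Fin n, 0 < p.2 i i}
      (fun p =>
        (1 / 2) * (Real.log S₁.det - Real.log ((p.2 * p.2ᵀ).det) - n +
          (S₁⁻¹ * (p.2 * p.2ᵀ)).trace +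
          (μ₁ - p.1) ⬝ᵥ (S₁⁻¹ *ᵥ (μ₁ - p.1)))) := by
  have hA : S₁⁻¹.PosSemidef := hS₁.inv.posSemidef
  have hcov : ConvexOn ℝ (choleskyFactors (Fin n))
      fun L => -Real.log (L * Lᵀ).det + (S₁⁻¹ * (L * Lᵀ)).trace :=
    concaveOn_log_det_mul_transpose.neg.add
      (hA.convexOn_trace_mul_mul_transpose.subset (subset_univ _) convex_choleskyFactors)
  have hmean := hA.convexOn_dotProduct_mulVec.comp_affineMap
    (AffineMap.const ℝ _ μ₁ - (LinearMap.fst ℝ _ (Matrix (Fin n) (Fin n) ℝ)).toAffineMap)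
  have hsum := (hcov.comp_linearMap (LinearMap.snd ℝ (Fin n → ℝ) _)).add
    (hmean.subset (subset_univ _) (convex_choleskyFactors.linear_preimage _))
  refine ((hsum.add_const (Real.log S₁.det - n)).smul (by norm_num : (0 : ℝ) ≤ 1 / 2)).congr
    fun p _ => ?_
  simp only [Function.comp_apply, Pi.add_apply, Pi.sub_apply, smul_eq_mul, LinearMap.snd_apply,
    LinearMap.fst_apply, AffineMap.coe_sub, AffineMap.coe_const, LinearMap.coe_toAffineMap,
    Function.const_apply]
  ring
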